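/- (Bose) Let P be a generic convex polygon with n ≥ 4 vertices. Then s_+ − t_+ = s_- − t_- = 2 and s_+ + t_+ + u_+ = s_- + t_- + u_- = n − 2. -/

import Mathlib

open EuclideanGeometry
open scoped Classical

noncomputable section

/-- The Euclidean plane. -/
abbrev Pt := EuclideanSpace ℝ (Fin 2)

/-- Signed area determinant of the triangle `a b c` (positive iff `a b c` is
counterclockwise, i.e. `c` lies strictly to the left of the directed line `a → b`). -/
def det2 (a b c : Pt) : ℝ :=
  (b 0 - a 0) * (c 1 - a 1) - (b 1 - a 1) * (c 0 - a 0)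

/-- The vertices `V 0, V 1, …, V (n-1)` (indices mod `n`) are distinct and in convex
position, listed counterclockwise: every other vertex lies strictly to the left of
each directed edge. -/
def ConvexCCW {n : ℕ} (V : ZMod n → Pt) : Prop :=
  Function.Injective V ∧
    ∀ i j : ZMod n, j ≠ i → j ≠ i + 1 → 0 < det2 (V i) (V (i + 1)) (V j)

/-- The polygon is generic: no three vertices are collinear and no four vertices lie
on a common circle. -/
def GenericPoly {n : ℕ} (V : ZMod n → Pt) : Prop :=
  (∀ i j k : ZMod n, i ≠ j → j ≠ k → i ≠ k →
      ¬ Collinear ℝ ({V i, V j, V k} : Set Pt)) ∧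
  (∀ i j k l : ZMod n, i ≠ j → i ≠ k → i ≠ l → j ≠ k → j ≠ l → k ≠ l →
      ¬ ∃ (O : Pt) (R : ℝ),
        dist (V i) O = R ∧ dist (V j) O = R ∧ dist (V k) O = R ∧ dist (V l) O = R)

/-- `O i` is the center and `R i` the radius of the circle `C i` through
`V (i-1)`, `V i`, `V (i+1)`. -/
def IsCircumData {n : ℕ} (V O : ZMod n → Pt) (R : ZMod n → ℝ) : Prop :=
  ∀ i : ZMod n,
    dist (V (i - 1)) (O i) = R i ∧ dist (V i) (O i) = R i ∧
      dist (V (i + 1)) (O i) = R i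

/-- The polygon is coherent: each circumcenter `O i` lies in the closed infinite cone
with apex `V i` spanned by the rays from `V i` through `V (i-1)` and `V (i+1)`. -/
def Coherent {n : ℕ} (V O : ZMod n → Pt) : Prop :=
  ∀ i : ZMod n, ∃ s t : ℝ, 0 ≤ s ∧ 0 ≤ t ∧
    O i - V i = s • (V (i - 1) - V i) + t • (V (i + 1) - V i)

/-- `V i` is locally maximal-extremal: `V (i-2)` and `V (i+2)` lie strictly outside `C i`. -/
def LocMax {n : ℕ} (V O : ZMod n → Pt) (R : ZMod n → ℝ) (i : ZMod n) : Prop :=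
  R i < dist (V (i - 2)) (O i) ∧ R i < dist (V (i + 2)) (O i)

/-- `V i` is locally minimal-extremal: `V (i-2)` and `V (i+2)` lie strictly inside `C i`. -/
def LocMin {n : ℕ} (V O : ZMod n → Pt) (R : ZMod n → ℝ) (i : ZMod n) : Prop :=
  dist (V (i - 2)) (O i) < R i ∧ dist (V (i + 2)) (O i) < R i

/-- `V i` is globally maximal-extremal: the open disk bounded by `C i` contains no vertex. -/
def GlobMax {n : ℕ} (V O : ZMod n → Pt) (R : ZMod n → ℝ) (i : ZMod n) : Prop :=
  ∀ j : ZMod n, R i ≤ dist (V j) (O i)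

/-- `V i` is globally minimal-extremal: the open disk bounded by `C i` contains every
vertex other than `V (i-1)`, `V i`, `V (i+1)`. -/
def GlobMin {n : ℕ} (V O : ZMod n → Pt) (R : ZMod n → ℝ) (i : ZMod n) : Prop :=
  ∀ j : ZMod n, j ≠ i - 1 → j ≠ i → j ≠ i + 1 → dist (V j) (O i) < R i

/-- `V i` is radially maximal-extremal: `R (i-1) < R i > R (i+1)`. -/
def RadMax {n : ℕ} (R : ZMod n → ℝ) (i : ZMod n) : Prop :=
  R (i - 1) < R i ∧ R (i + 1) < R i

/-- `V i` is radially minimal-extremal: `R (i-1) > R i < R (i+1)`. -/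
def RadMin {n : ℕ} (R : ZMod n → ℝ) (i : ZMod n) : Prop :=
  R i < R (i - 1) ∧ R i < R (i + 1)

end

noncomputable section

/-- The circle through the three vertices indexed by `T` is empty: its open disk
contains no vertex of the polygon. -/
def EmptyCircle {n : ℕ} (V : ZMod n → Pt) (T : Finset (ZMod n)) : Prop :=
  ∃ (O : Pt) (R : ℝ), (∀ v ∈ T, dist (V v) O = R) ∧ ∀ j : ZMod n, R ≤ dist (V j) O

/-- The circle through the three vertices indexed by `T` is full: its open disk
contains all vertices of the polygon other than those indexed by `T`. -/
def FullCircle {n : ℕ} (V : ZMod n → Pt) (T : Finset (ZMod n)) : Prop :=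
  ∃ (O : Pt) (R : ℝ), (∀ v ∈ T, dist (V v) O = R) ∧
    ∀ j : ZMod n, j ∉ T → dist (V j) O < R

/-- The number of adjacent (along the polygon) pairs of indices inside `T`.
A triple is neighboring iff this number is `2`, intermediate iff it is `1`,
and disjoint iff it is `0`. -/
def adjPairs {n : ℕ} (T : Finset (ZMod n)) : ℕ :=
  {p : ZMod n × ZMod n | p.1 ∈ T ∧ p.2 ∈ T ∧ p.2 = p.1 + 1}.ncard

end

/-!
Empty and full circles are handled together: a triangle is `σ`-Delaunay when its circumcircle has
every other vertex strictly outside (`σ > 0`) or strictly inside (`σ < 0`). For a convex polygon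
these triangles form a triangulation. Given a chord `a c` and a circle through `a` and `c` with all
vertices on the `σ`-side, sweeping the pencil of circles through `a` and `c` yields the apex `b`
of a `σ`-Delaunay triangle `a b c`. Two `σ`-Delaunay triangles never have crossing sides, because
along a crossing the difference of their powers, an affine function, would be both nonnegative
and negative. So every other such triangle of the arc `a … c` lies in the arc `a … b` or in
`b … c`, and induction gives `n - 2` triangles, with every side of the polygon in exactly one of
them. If `s`, `u`, `t` of them have `2`, `1`, `0` sides on the polygon, then `s + u + t = n - 2`
and `2 s + u = n`, whence `s - t = 2`.
-/

open Finset

noncomputable section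

def distSq (x y : Pt) : ℝ := (x 0 - y 0) ^ 2 + (x 1 - y 1) ^ 2

lemma dist_sq_eq_distSq (x y : Pt) : dist x y ^ 2 = distSq x y := by
  rw [EuclideanSpace.dist_eq, Real.sq_sqrt (by positivity)]
  simp [distSq, Fin.sum_univ_two, Real.dist_eq, sq_abs]

lemma dist_lt_dist_iff_distSq {x y z w : Pt} : dist x y < dist z w ↔ distSq x y < distSq z w := by
  rw [← dist_sq_eq_distSq, ← dist_sq_eq_distSq, sq_lt_sq₀ dist_nonneg dist_nonneg]

lemma dist_le_dist_iff_distSq {x y z w : Pt} : dist x y ≤ dist z w ↔ distSq x y ≤ distSq z w := by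
  rw [← dist_sq_eq_distSq, ← dist_sq_eq_distSq, sq_le_sq₀ dist_nonneg dist_nonneg]

lemma dist_eq_dist_iff_distSq {x y z w : Pt} : dist x y = dist z w ↔ distSq x y = distSq z w := by
  simp only [le_antisymm_iff, dist_le_dist_iff_distSq]

lemma det2_rotate (a b c : Pt) : det2 a b c = det2 b c a := by unfold det2; ring

lemma det2_swap (a b c : Pt) : det2 a b c = -det2 a c b := by unfold det2; ring

def SegmentsCross (p₁ p₂ q₁ q₂ : Pt) : Prop :=
  det2 p₁ p₂ q₁ * det2 p₁ p₂ q₂ < 0 ∧ det2 q₁ q₂ p₁ * det2 q₁ q₂ p₂ < 0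

lemma div_sub_mem_Ioo {x y : ℝ} (h : x * y < 0) : 0 < x / (x - y) ∧ x / (x - y) < 1 := by
  rcases mul_neg_iff.1 h with ⟨hx, hy⟩ | ⟨hx, hy⟩
  · exact ⟨div_pos hx (by linarith), (div_lt_one (by linarith)).2 (by linarith)⟩
  · exact ⟨div_pos_of_neg_of_neg hx (by linarith),
      (div_lt_one_of_neg (by linarith)).2 (by linarith)⟩

lemma SegmentsCross.exists_lineMap_eq {p₁ p₂ q₁ q₂ : Pt} (h : SegmentsCross p₁ p₂ q₁ q₂) :
    ∃ s t : ℝ, 0 < s ∧ s < 1 ∧ 0 < t ∧ t < 1 ∧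
      AffineMap.lineMap p₁ p₂ s = AffineMap.lineMap q₁ q₂ t := by
  obtain ⟨hs₀, hs₁⟩ := div_sub_mem_Ioo h.2
  obtain ⟨ht₀, ht₁⟩ := div_sub_mem_Ioo h.1
  refine ⟨_, _, hs₀, hs₁, ht₀, ht₁, ?_⟩
  have he : det2 q₁ q₂ p₁ - det2 q₁ q₂ p₂ ≠ 0 := fun h0 => by
    have h2 := h.2; rw [sub_eq_zero.1 h0] at h2; nlinarith
  have hd : det2 p₁ p₂ q₁ - det2 p₁ p₂ q₂ ≠ 0 := fun h0 => by
    have h1 := h.1; rw [sub_eq_zero.1 h0] at h1; nlinarith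
  ext i
  fin_cases i <;> simp [AffineMap.lineMap_apply] <;> field_simp <;> unfold det2 <;> ring

lemma distSq_lineMap_sub (p q O O' : Pt) (r r' t : ℝ) :
    (distSq (AffineMap.lineMap p q t) O - r) - (distSq (AffineMap.lineMap p q t) O' - r') =
      (1 - t) * ((distSq p O - r) - (distSq p O' - r')) +
        t * ((distSq q O - r) - (distSq q O' - r')) := by
  simp [distSq, AffineMap.lineMap_apply]; ring

/-- Centers of the circles through `A` and `C`, running along the perpendicular bisector of `A C`;
`pencilParam A C x` is the parameter of the circle through `x` (see `pencil_power`). -/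
def pencilCenter (A C : Pt) (s : ℝ) : Pt :=
  !₂[(A 0 + C 0) / 2 - s * (C 1 - A 1), (A 1 + C 1) / 2 + s * (C 0 - A 0)]

def pencilParam (A C x : Pt) : ℝ :=
  (distSq x (pencilCenter A C 0) - distSq A (pencilCenter A C 0)) / (2 * det2 A C x)

section Pencil

variable (A C : Pt)

lemma distSq_pencilCenter_left_eq_right (s : ℝ) :
    distSq A (pencilCenter A C s) = distSq C (pencilCenter A C s) := by
  simp [distSq, pencilCenter]; ring

lemma pencil_power {x : Pt} (hx : det2 A C x ≠ 0) (s : ℝ) :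
    distSq x (pencilCenter A C s) - distSq A (pencilCenter A C s) =
      2 * det2 A C x * (pencilParam A C x - s) := by
  rw [pencilParam, mul_sub, mul_div_cancel₀ _ (mul_ne_zero two_ne_zero hx)]
  simp [distSq, pencilCenter, det2]; ring

lemma pencil_power_nonneg_iff_of_neg {x : Pt} (hx : det2 A C x < 0) (σ s : ℝ) :
    0 ≤ σ * (distSq x (pencilCenter A C s) - distSq A (pencilCenter A C s)) ↔
      σ * pencilParam A C x ≤ σ * s := by
  rw [pencil_power A C hx.ne, show σ * (2 * det2 A C x * (pencilParam A C x - s)) =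
    -(2 * det2 A C x) * (σ * s - σ * pencilParam A C x) by ring,
    mul_nonneg_iff_of_pos_left (by linarith), sub_nonneg]

lemma pencil_power_nonneg_iff_of_pos {x : Pt} (hx : 0 < det2 A C x) (σ s : ℝ) :
    0 ≤ σ * (distSq x (pencilCenter A C s) - distSq A (pencilCenter A C s)) ↔
      σ * s ≤ σ * pencilParam A C x := by
  rw [pencil_power A C hx.ne', show σ * (2 * det2 A C x * (pencilParam A C x - s)) =
    (2 * det2 A C x) * (σ * pencilParam A C x - σ * s) by ring,
    mul_nonneg_iff_of_pos_left (by linarith), sub_nonneg]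

end Pencil

lemma exists_eq_pencilCenter {A C : Pt} (hAC : A ≠ C) {O : Pt} (hO : distSq A O = distSq C O) :
    ∃ s, O = pencilCenter A C s := by
  have hD : distSq A C ≠ 0 := fun h => hAC <| by
    unfold distSq at h
    ext i; fin_cases i <;> simp <;> nlinarith [sq_nonneg (A 0 - C 0), sq_nonneg (A 1 - C 1)]
  have hperp :
      (O 0 - (A 0 + C 0) / 2) * (C 0 - A 0) + (O 1 - (A 1 + C 1) / 2) * (C 1 - A 1) = 0 := by
    unfold distSq at hO; linear_combination hO / 2
  refine ⟨((O 1 - (A 1 + C 1) / 2) * (C 0 - A 0) - (O 0 - (A 0 + C 0) / 2) * (C 1 - A 1)) /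
    distSq A C, ?_⟩
  unfold distSq at hD ⊢
  ext i; fin_cases i <;> simp [pencilCenter] <;> field_simp
  · linear_combination (2 * (C 0 - A 0)) * hperp
  · linear_combination (2 * (C 1 - A 1)) * hperp

section Polygon

variable {n : ℕ} {V : ZMod n → Pt} {σ : ℝ}

def gap (u v : ZMod n) : ℕ := (v - u).val

lemma gap_add_natCast (u : ZMod n) {k : ℕ} (hk : k < n) : gap u (u + k) = k := by
  simp [gap, ZMod.val_natCast, Nat.mod_eq_of_lt hk]

@[simp] lemma gap_self (u : ZMod n) : gap u u = 0 := by simp [gap]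

lemma ConvexCCW.det2_pos_add (hconv : ConvexCCW V) (a : ZMod n) {i j : ℕ}
    (hi : 0 < i) (hij : i < j) (hj : j < n) : 0 < det2 (V a) (V (a + i)) (V (a + j)) := by
  have hne : ∀ {k l : ℕ}, k < n → l < n → k ≠ l → a + (k : ZMod n) ≠ a + l := fun hk hl hkl h =>
    hkl (by rw [← gap_add_natCast a hk, h, gap_add_natCast a hl])
  have hleft : ∀ k : ℕ, 0 < k → k + 1 < n →
      0 < det2 (V a) (V (a + k)) (V (a + (k + 1 : ℕ))) := by
    intro k hk hkn
    have h := hconv.2 (a + k) a (by simpa using (hne (k := 0) (by omega) (by omega) (by omega)))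
      (by simpa [add_assoc] using hne (k := 0) (l := k + 1) (by omega) hkn (by omega))
    rw [det2_rotate]
    simpa [add_assoc] using h
  have hright : ∀ k : ℕ, 1 < k → k < n → 0 < det2 (V a) (V (a + 1)) (V (a + k)) := by
    intro k hk hkn
    exact hconv.2 a (a + k) (by simpa using (hne (k := k) (l := 0) hkn (by omega) (by omega)))
      (by simpa using hne (k := k) (l := 1) hkn (by omega) (by omega))
  induction j, hij using Nat.le_induction with
  | base => exact hleft i hi hj
  | succ j hij ih =>
    have hj₀ := ih (by omega)
    -- three-term Plücker relation for the directions from `V a`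
    have key : det2 (V a) (V (a + 1)) (V (a + j)) * det2 (V a) (V (a + i)) (V (a + (j + 1 : ℕ))) =
        det2 (V a) (V (a + 1)) (V (a + i)) * det2 (V a) (V (a + j)) (V (a + (j + 1 : ℕ))) +
          det2 (V a) (V (a + 1)) (V (a + (j + 1 : ℕ))) * det2 (V a) (V (a + i)) (V (a + j)) := by
      unfold det2; ring
    have hi₁ : 0 ≤ det2 (V a) (V (a + 1)) (V (a + i)) := by
      rcases (show i = 1 ∨ 1 < i by omega) with rfl | h
      · apply le_of_eq; simp [det2]; ring
      · exact (hright i h (by omega)).le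
    refine pos_of_mul_pos_right ?_ (hright j (by omega) (by omega)).le
    rw [key]
    have := hleft j (by omega) hj
    have := hright (j + 1) (by omega) hj
    positivity

lemma card_triangle {a : ZMod n} {k L : ℕ} (hk : 0 < k) (hkL : k < L - 1) (hLn : L ≤ n) :
    ({a, a + k, a + (L - 1 : ℕ)} : Finset (ZMod n)).card = 3 := by
  have hb := gap_add_natCast a (show k < n by omega)
  have hc := gap_add_natCast a (show L - 1 < n by omega)
  refine card_eq_three.2 ⟨_, _, _, fun h => ?_, fun h => ?_, fun h => ?_, rfl⟩
  · rw [← h, gap_self] at hb; omega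
  · rw [← h, gap_self] at hc; omega
  · rw [h] at hb; omega

/-- `σ > 0` puts the other vertices indexed by `A` strictly outside the circle through `T` (empty
circles), `σ < 0` strictly inside (full circles). -/
def IsDelaunay (σ : ℝ) (V : ZMod n → Pt) (A T : Finset (ZMod n)) : Prop :=
  ∃ (O : Pt) (r : ℝ), (∀ v ∈ T, distSq (V v) O = r) ∧
    ∀ x ∈ A, x ∉ T → 0 < σ * (distSq (V x) O - r)

def IsDelaunayEdge (σ : ℝ) (V : ZMod n → Pt) (a c : ZMod n) : Prop :=
  ∃ O : Pt, distSq (V a) O = distSq (V c) O ∧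
    ∀ x, 0 ≤ σ * (distSq (V x) O - distSq (V a) O)

def delaunayTriangles (σ : ℝ) (V : ZMod n → Pt) (A : Finset (ZMod n)) :
    Finset (Finset (ZMod n)) :=
  (A.powersetCard 3).filter (IsDelaunay σ V A)

lemma mem_delaunayTriangles {A T : Finset (ZMod n)} :
    T ∈ delaunayTriangles σ V A ↔ T ⊆ A ∧ T.card = 3 ∧ IsDelaunay σ V A T := by
  rw [delaunayTriangles, mem_filter, mem_powersetCard, and_assoc]

lemma IsDelaunay.mono {A B T : Finset (ZMod n)} (h : IsDelaunay σ V A T) (hBA : B ⊆ A) :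
    IsDelaunay σ V B T := by
  obtain ⟨O, r, hT, hA⟩ := h
  exact ⟨O, r, hT, fun x hx => hA x (hBA hx)⟩

/-- Along a crossing, the difference of the two powers, which is affine, would be both
nonnegative and negative. -/
lemma IsDelaunay.not_segmentsCross {A T T' : Finset (ZMod n)} (hT : IsDelaunay σ V A T)
    (hT' : IsDelaunay σ V A T') (hTA : T ⊆ A) (hT'A : T' ⊆ A) {p₁ p₂ q₁ q₂ : ZMod n}
    (hp₁ : p₁ ∈ T) (hp₂ : p₂ ∈ T) (hq₁ : q₁ ∈ T') (hq₁T : q₁ ∉ T) (hq₂ : q₂ ∈ T') :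
    ¬ SegmentsCross (V p₁) (V p₂) (V q₁) (V q₂) := by
  intro hcross
  obtain ⟨O, r, hOT, hO⟩ := hT
  obtain ⟨O', r', hO'T, hO'⟩ := hT'
  have hO'p : ∀ p ∈ T, 0 ≤ σ * (distSq (V p) O' - r') := fun p hp => by
    by_cases hpT' : p ∈ T'
    · simp [hO'T p hpT']
    · exact (hO' p (hTA hp) hpT').le
  have hOq₂ : 0 ≤ σ * (distSq (V q₂) O - r) := by
    by_cases hq₂T : q₂ ∈ T
    · simp [hOT q₂ hq₂T]
    · exact (hO q₂ (hT'A hq₂) hq₂T).le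
  have hOq₁ := hO q₁ (hT'A hq₁) hq₁T
  obtain ⟨s, t, hs₀, hs₁, ht₀, ht₁, hst⟩ := hcross.exists_lineMap_eq
  have hp := distSq_lineMap_sub (V p₁) (V p₂) O' O r' r s
  have hq := distSq_lineMap_sub (V q₁) (V q₂) O' O r' r t
  rw [hst, hq, hOT p₁ hp₁, hOT p₂ hp₂, hO'T q₁ hq₁, hO'T q₂ hq₂] at hp
  have := mul_nonneg (sub_nonneg.2 hs₁.le) (hO'p p₁ hp₁)
  have := mul_nonneg hs₀.le (hO'p p₂ hp₂)
  have := mul_pos (sub_pos.2 ht₁) hOq₁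
  have := mul_nonneg ht₀.le hOq₂
  nlinarith [congrArg (σ * ·) hp]

lemma GenericPoly.distSq_ne (hgen : GenericPoly V) {a b c x : ZMod n} (hab : a ≠ b) (hac : a ≠ c)
    (hbc : b ≠ c) (hxa : x ≠ a) (hxb : x ≠ b) (hxc : x ≠ c) {O : Pt}
    (hb : distSq (V b) O = distSq (V a) O) (hc : distSq (V c) O = distSq (V a) O) :
    distSq (V x) O ≠ distSq (V a) O := fun hx =>
  hgen.2 a b c x hab hac hxa.symm hbc hxb.symm hxc.symm ⟨O, dist (V a) O, rfl,
    dist_eq_dist_iff_distSq.2 hb, dist_eq_dist_iff_distSq.2 hc, dist_eq_dist_iff_distSq.2 hx⟩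

structure IsSideTriangulation (D : Finset (Finset (ZMod n))) : Prop where
  card_eq_three : ∀ T ∈ D, T.card = 3
  card_eq : D.card = n - 2
  existsUnique_side : ∀ i : ZMod n, ∃! T, T ∈ D ∧ i ∈ T ∧ i + 1 ∈ T

lemma ncard_setOf_eq_card_filter {P : Finset (ZMod n) → Prop} {D : Finset (Finset (ZMod n))}
    (hD : ∀ T, T ∈ D ↔ T.card = 3 ∧ P T) (k : ℕ) :
    {T | T.card = 3 ∧ P T ∧ adjPairs T = k}.ncard = #(D.filter (adjPairs · = k)) := by
  rw [← Set.ncard_coe_finset]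
  congr 1
  ext T
  simp [hD, and_assoc]

variable [NeZero n]

lemma gap_lt (u v : ZMod n) : gap u v < n := ZMod.val_lt _

@[simp] lemma add_gap (u v : ZMod n) : u + (gap u v : ZMod n) = v := by
  simp [gap]

lemma gap_injective (u : ZMod n) : Function.Injective (gap u) := fun v w h => by
  rw [← add_gap u v, h, add_gap]

lemma gap_add_gap (u v w : ZMod n) :
    gap u v + gap v w = gap u w ∨ gap u v + gap v w = gap u w + n := by
  have hsum : gap u w = (gap u v + gap v w) % n := by
    rw [gap, gap, gap, ← ZMod.val_add, sub_add_sub_cancel']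
  have := gap_lt u v
  have := gap_lt v w
  rcases lt_or_ge (gap u v + gap v w) n with h | h
  · rw [Nat.mod_eq_of_lt h] at hsum; omega
  · rw [Nat.mod_eq_sub_mod h, Nat.mod_eq_of_lt (by omega)] at hsum; omega

lemma gap_pos_of_ne {u v : ZMod n} (h : u ≠ v) : 0 < gap u v :=
  Nat.pos_of_ne_zero fun h₀ => h (gap_injective u (h₀.trans (gap_self u).symm)).symm

lemma ConvexCCW.det2_pos (hconv : ConvexCCW V) {u v w : ZMod n}
    (huv : 0 < gap u v) (hvw : gap u v < gap u w) : 0 < det2 (V u) (V v) (V w) := by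
  simpa using hconv.det2_pos_add u huv hvw (gap_lt u w)

lemma ConvexCCW.segmentsCross (hconv : ConvexCCW V) {u v w x : ZMod n}
    (huv : 0 < gap u v) (hvw : gap u v < gap u w) (hwx : gap u w < gap u x) :
    SegmentsCross (V u) (V w) (V v) (V x) := by
  have := gap_add_gap u v w
  have := gap_add_gap u v x
  have := gap_lt v w
  have := gap_lt v x
  have h₁ := hconv.det2_pos huv hvw
  have h₂ := hconv.det2_pos (huv.trans_le hvw.le) hwx
  have h₃ := hconv.det2_pos huv (hvw.trans hwx)
  have h₄ := hconv.det2_pos (u := v) (v := w) (w := x) (by omega) (by omega)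
  rw [det2_swap] at h₁ h₄
  rw [det2_rotate] at h₃
  constructor <;> nlinarith

lemma mem_delaunayTriangles_univ {T : Finset (ZMod n)} :
    T ∈ delaunayTriangles σ V univ ↔ T.card = 3 ∧ IsDelaunay σ V univ T := by
  simp [mem_delaunayTriangles]

lemma IsDelaunay.isDelaunayEdge {T : Finset (ZMod n)}
    (h : IsDelaunay σ V univ T) {a c : ZMod n} (ha : a ∈ T) (hc : c ∈ T) :
    IsDelaunayEdge σ V a c := by
  obtain ⟨O, r, hT, hA⟩ := h
  refine ⟨O, by rw [hT a ha, hT c hc], fun x => ?_⟩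
  rw [hT a ha]
  by_cases hx : x ∈ T
  · simp [hT x hx]
  · exact (hA x (mem_univ x) hx).le

lemma ConvexCCW.det2_neg (hconv : ConvexCCW V) {u v w : ZMod n}
    (huv : 0 < gap u v) (hvw : gap u v < gap u w) : det2 (V u) (V w) (V v) < 0 := by
  rw [det2_swap, neg_lt_zero]
  exact hconv.det2_pos huv hvw

lemma GenericPoly.isDelaunay_of_nonneg (hgen : GenericPoly V) (hσ : σ ≠ 0) {a b c : ZMod n}
    (hab : a ≠ b) (hac : a ≠ c) (hbc : b ≠ c) {O : Pt} (hb : distSq (V b) O = distSq (V a) O)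
    (hc : distSq (V c) O = distSq (V a) O) (hO : ∀ x, 0 ≤ σ * (distSq (V x) O - distSq (V a) O)) :
    IsDelaunay σ V univ {a, b, c} := by
  refine ⟨O, distSq (V a) O, ?_, fun x _ hx => ?_⟩
  · simp only [mem_insert, mem_singleton]
    rintro v (rfl | rfl | rfl)
    exacts [rfl, hb, hc]
  · simp only [mem_insert, mem_singleton, not_or] at hx
    have hne := hgen.distSq_ne hab hac hbc hx.1 hx.2.1 hx.2.2 hb hc
    refine (hO x).lt_of_ne fun h => hne ?_
    linarith [(mul_eq_zero.1 h.symm).resolve_left hσ]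

/-- Among the circles through `V a` and `V c`, sweep towards the arc from `a` to `c` until the
circle first meets one of its interior vertices `V (a + k)`: by the choice of `k` that circle keeps
the other interior vertices on the `σ`-side, and since it lies between the given circle and the
chord on the far side, so does every vertex outside the arc. -/
lemma exists_isDelaunay_triangle (hσ : σ ≠ 0) (hconv : ConvexCCW V) (hgen : GenericPoly V)
    {a : ZMod n} {L : ℕ} (hL : 3 ≤ L) (hLn : L ≤ n)
    (hedge : IsDelaunayEdge σ V a (a + (L - 1 : ℕ))) :
    ∃ k : ℕ, 0 < k ∧ k < L - 1 ∧ IsDelaunay σ V univ {a, a + k, a + (L - 1 : ℕ)} := by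
  set c := a + ((L - 1 : ℕ) : ZMod n)
  have hgc : gap a c = L - 1 := gap_add_natCast a (by omega)
  set τ : ZMod n → ℝ := fun x => σ * pencilParam (V a) (V c) (V x)
  obtain ⟨k, hk, hkmax⟩ := (Ioo 0 (L - 1)).exists_max_image (fun k : ℕ => τ (a + k))
    ⟨1, by simp; omega⟩
  rw [mem_Ioo] at hk
  set b := a + (k : ZMod n)
  have hgb : gap a b = k := gap_add_natCast a (by omega)
  have hab : a ≠ b := fun h => by simp [← h] at hgb; omega
  have hac : a ≠ c := fun h => by simp [← h] at hgc; omega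
  have hbc : b ≠ c := fun h => by rw [h] at hgb; omega
  obtain ⟨O, hOac, hO⟩ := hedge
  obtain ⟨s₀, rfl⟩ := exists_eq_pencilCenter (hconv.1.ne hac) hOac
  set s := pencilParam (V a) (V c) (V b)
  set O₁ := pencilCenter (V a) (V c) s
  have hdb : det2 (V a) (V c) (V b) < 0 := hconv.det2_neg (by omega) (by omega)
  have hs₀ : τ b ≤ σ * s₀ := (pencil_power_nonneg_iff_of_neg _ _ hdb σ s₀).1 (hO b)
  have hO₁ : ∀ x, 0 ≤ σ * (distSq (V x) O₁ - distSq (V a) O₁) := by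
    intro x
    have := gap_lt a x
    rcases lt_trichotomy (gap a x) (L - 1) with hx | hx | hx
    · rcases Nat.eq_zero_or_pos (gap a x) with hx₀ | hx₀
      · rw [gap_injective a (hx₀.trans (gap_self a).symm)]; simp
      refine (pencil_power_nonneg_iff_of_neg _ _ (hconv.det2_neg hx₀ (hgc ▸ hx)) σ s).2 ?_
      simpa using hkmax (gap a x) (mem_Ioo.2 ⟨hx₀, hx⟩)
    · rw [← hgc] at hx
      rw [gap_injective a hx, ← distSq_pencilCenter_left_eq_right]; simp [O₁]
    · have hdx : 0 < det2 (V a) (V c) (V x) := hconv.det2_pos (by omega) (hgc ▸ hx)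
      refine (pencil_power_nonneg_iff_of_pos _ _ hdx σ s).2 ?_
      exact hs₀.trans ((pencil_power_nonneg_iff_of_pos _ _ hdx σ s₀).1 (hO x))
  have hO₁b : distSq (V b) O₁ = distSq (V a) O₁ := by
    simpa [s, sub_eq_zero] using pencil_power (V a) (V c) hdb.ne s
  exact ⟨k, hk.1, hk.2, hgen.isDelaunay_of_nonneg hσ hab hac hbc hO₁b
    (distSq_pencilCenter_left_eq_right _ _ s).symm hO₁⟩

def arc (a : ZMod n) (L : ℕ) : Finset (ZMod n) := univ.filter fun x => gap a x < L

@[simp] lemma mem_arc {a x : ZMod n} {L : ℕ} : x ∈ arc a L ↔ gap a x < L := by simp [arc]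

lemma arc_eq_univ (a : ZMod n) {L : ℕ} (hL : n ≤ L) : arc a L = univ := by
  ext x; simpa using (gap_lt a x).trans_le hL

lemma card_arc_le (a : ZMod n) (L : ℕ) : #(arc a L) ≤ L :=
  (card_le_card_of_injOn (gap a) (fun x hx => by simpa using hx) (gap_injective a).injOn).trans
    (card_range L).le

/-- With `b = a + k` and `c = a + (L - 1)`, a vertex `w` of `T` off `{a, b, c}` lies strictly
inside `a … b` or `b … c`; a vertex of `T` on the other side of `b` then gives a side of `T`
crossing `a b` or `b c`. -/
lemma subset_arc_or_subset_arc_of_isDelaunay (hconv : ConvexCCW V) {a : ZMod n} {k L : ℕ}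
    (hk : 0 < k) (hkL : k < L - 1) (hLn : L ≤ n)
    (hT₁ : IsDelaunay σ V (arc a L) {a, a + k, a + (L - 1 : ℕ)}) {T : Finset (ZMod n)}
    (hT : T ∈ delaunayTriangles σ V (arc a L)) (hne : T ≠ {a, a + k, a + (L - 1 : ℕ)}) :
    T ⊆ arc a (k + 1) ∨ T ⊆ arc (a + k) (L - k) := by
  set b := a + (k : ZMod n)
  set c := a + ((L - 1 : ℕ) : ZMod n)
  obtain ⟨hTA, hT3, hTD⟩ := mem_delaunayTriangles.1 hT
  have hgb : gap a b = k := gap_add_natCast a (by omega)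
  have hgc : gap a c = L - 1 := gap_add_natCast a (by omega)
  have hT₁A : {a, b, c} ⊆ arc a L := by
    simp only [insert_subset_iff, singleton_subset_iff, mem_arc, gap_self, hgb, hgc]; omega
  obtain ⟨w, hwT, hwT₁⟩ := not_subset.1 fun h => hne (eq_of_subset_of_card_le h (by
    rw [hT3]; exact card_le_three))
  simp only [mem_insert, mem_singleton, not_or] at hwT₁
  obtain ⟨hwa, hwb, hwc⟩ := hwT₁
  have hgw := mem_arc.1 (hTA hwT)
  have hgw₀ := gap_pos_of_ne (Ne.symm hwa)
  have hgwb : gap a w ≠ k := hgb ▸ (gap_injective a).ne hwb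
  have hgwc : gap a w ≠ L - 1 := hgc ▸ (gap_injective a).ne hwc
  by_contra! h
  obtain ⟨x, hxT, hx⟩ := not_subset.1 h.1
  obtain ⟨y, hyT, hy⟩ := not_subset.1 h.2
  rw [mem_arc] at hx hy
  have := mem_arc.1 (hTA hyT)
  have := gap_add_gap a b w
  have := gap_add_gap a b c
  have := gap_add_gap a b y
  have := gap_lt b w
  have := gap_lt b y
  have := gap_lt b c
  have := gap_lt a x
  rcases lt_or_gt_of_ne hgwb with hw | hw
  · refine hT₁.not_segmentsCross hTD hT₁A hTA (p₁ := a) (p₂ := b) (by simp) (by simp) hwT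
      (by simp [hwa, hwb, hwc]) hxT (hconv.segmentsCross hgw₀ (by omega) (by omega))
  · refine hT₁.not_segmentsCross hTD hT₁A hTA (p₁ := b) (p₂ := c) (by simp) (by simp) hwT
      (by simp [hwa, hwb, hwc]) hyT (hconv.segmentsCross (u := b) ?_ ?_ ?_)
    all_goals omega

lemma delaunayTriangles_arc_eq (hconv : ConvexCCW V) {a : ZMod n} {k L : ℕ} (hk : 0 < k)
    (hkL : k < L - 1) (hLn : L ≤ n) (hT₁ : IsDelaunay σ V univ {a, a + k, a + (L - 1 : ℕ)})
    (hD₁ : ∀ T ∈ delaunayTriangles σ V (arc a (k + 1)), IsDelaunay σ V univ T)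
    (hD₂ : ∀ T ∈ delaunayTriangles σ V (arc (a + k) (L - k)), IsDelaunay σ V univ T) :
    delaunayTriangles σ V (arc a L) = insert {a, a + k, a + (L - 1 : ℕ)}
      (delaunayTriangles σ V (arc a (k + 1)) ∪ delaunayTriangles σ V (arc (a + k) (L - k))) := by
  have hgb : gap a (a + (k : ZMod n)) = k := gap_add_natCast a (by omega)
  have harc₁ : arc a (k + 1) ⊆ arc a L := fun x hx => by rw [mem_arc] at hx ⊢; omega
  have harc₂ : arc (a + (k : ZMod n)) (L - k) ⊆ arc a L := fun x hx => by
    have := gap_add_gap a (a + (k : ZMod n)) x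
    have := gap_lt a x
    rw [mem_arc] at hx ⊢
    omega
  have hsub : ∀ {B}, B ⊆ arc a L → (∀ T ∈ delaunayTriangles σ V B, IsDelaunay σ V univ T) →
      delaunayTriangles σ V B ⊆ delaunayTriangles σ V (arc a L) := fun hB hD T hT => by
    obtain ⟨hTB, hT3, -⟩ := mem_delaunayTriangles.1 hT
    exact mem_delaunayTriangles.2 ⟨hTB.trans hB, hT3, (hD T hT).mono (subset_univ _)⟩
  ext T
  simp only [mem_insert, mem_union]
  constructor
  · intro hT
    obtain ⟨-, hT3, hTD⟩ := mem_delaunayTriangles.1 hT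
    by_cases hne : T = {a, a + k, a + (L - 1 : ℕ)}
    · exact Or.inl hne
    rcases subset_arc_or_subset_arc_of_isDelaunay hconv hk hkL hLn (hT₁.mono (subset_univ _)) hT
      hne with h | h
    · exact Or.inr (Or.inl (mem_delaunayTriangles.2 ⟨h, hT3, hTD.mono harc₁⟩))
    · exact Or.inr (Or.inr (mem_delaunayTriangles.2 ⟨h, hT3, hTD.mono harc₂⟩))
  · rintro (rfl | hT | hT)
    · refine mem_delaunayTriangles.2 ⟨?_, ?_, hT₁.mono (subset_univ _)⟩
      · simp only [insert_subset_iff, singleton_subset_iff, mem_arc, gap_self, hgb,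
          gap_add_natCast a (show L - 1 < n by omega)]
        omega
      · exact card_triangle hk hkL hLn
    · exact hsub harc₁ hD₁ hT
    · exact hsub harc₂ hD₂ hT

lemma card_insert_union_delaunayTriangles {a : ZMod n} {k L : ℕ} (hk : 0 < k) (hkL : k < L - 1)
    (hLn : L ≤ n) :
    #(insert {a, a + k, a + (L - 1 : ℕ)}
        (delaunayTriangles σ V (arc a (k + 1)) ∪ delaunayTriangles σ V (arc (a + k) (L - k)))) =
      #(delaunayTriangles σ V (arc a (k + 1))) +
        #(delaunayTriangles σ V (arc (a + k) (L - k))) + 1 := by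
  have hgb : gap a (a + (k : ZMod n)) = k := gap_add_natCast a (by omega)
  have hgc : gap a (a + ((L - 1 : ℕ) : ZMod n)) = L - 1 := gap_add_natCast a (by omega)
  have hgba := gap_add_gap a (a + (k : ZMod n)) a
  rw [gap_self] at hgba
  have := gap_lt (a + (k : ZMod n)) a
  rw [card_insert_of_notMem, card_union_of_disjoint]
  · rw [disjoint_left]
    intro T h₁ h₂
    obtain ⟨hT₁, hT3, -⟩ := mem_delaunayTriangles.1 h₁
    have hT₂ := (mem_delaunayTriangles.1 h₂).1
    have hTb : T ⊆ {a + (k : ZMod n)} := fun x hx => by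
      have := mem_arc.1 (hT₁ hx)
      have := mem_arc.1 (hT₂ hx)
      have := gap_add_gap a (a + (k : ZMod n)) x
      have hx₀ : gap (a + (k : ZMod n)) x = 0 := by omega
      rw [mem_singleton, ← add_gap (a + (k : ZMod n)) x, hx₀, Nat.cast_zero, add_zero]
    have := card_le_card hTb
    rw [hT3, card_singleton] at this
    omega
  · rw [mem_union, not_or]
    constructor <;> intro h <;> have hT := (mem_delaunayTriangles.1 h).1
    · have := mem_arc.1 (hT (by simp : a + ((L - 1 : ℕ) : ZMod n) ∈ _)); omega
    · have := mem_arc.1 (hT (by simp : a ∈ _)); omega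

theorem delaunayTriangles_arc (hσ : σ ≠ 0) (hconv : ConvexCCW V) (hgen : GenericPoly V)
    {L : ℕ} (hL : 2 ≤ L) (hLn : L ≤ n) {a : ZMod n}
    (hedge : IsDelaunayEdge σ V a (a + (L - 1 : ℕ))) :
    #(delaunayTriangles σ V (arc a L)) = L - 2 ∧
      ∀ T ∈ delaunayTriangles σ V (arc a L), IsDelaunay σ V univ T := by
  induction L using Nat.strong_induction_on generalizing a with
  | _ L ih =>
  rcases hL.eq_or_lt with rfl | hL
  · have : delaunayTriangles σ V (arc a 2) = ∅ := by
      rw [delaunayTriangles, powersetCard_eq_empty.2 ((card_arc_le a 2).trans_lt (by norm_num)),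
        filter_empty]
    simp [this]
  obtain ⟨k, hk, hkL, hT₁⟩ := exists_isDelaunay_triangle hσ hconv hgen hL hLn hedge
  have hc : a + (k : ZMod n) + ((L - k - 1 : ℕ) : ZMod n) = a + ((L - 1 : ℕ) : ZMod n) := by
    rw [add_assoc, ← Nat.cast_add]; congr 2; omega
  obtain ⟨hcard₁, hD₁⟩ := ih (k + 1) (by omega) (by omega) (by omega)
    (by simpa using hT₁.isDelaunayEdge (a := a) (c := a + k) (by simp) (by simp))
  obtain ⟨hcard₂, hD₂⟩ := ih (L - k) (by omega) (by omega) (by omega) (a := a + k)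
    (by rw [hc]; exact hT₁.isDelaunayEdge (by simp) (by simp))
  rw [delaunayTriangles_arc_eq hconv hk hkL hLn hT₁ hD₁ hD₂]
  refine ⟨by rw [card_insert_union_delaunayTriangles hk hkL hLn, hcard₁, hcard₂]; omega, ?_⟩
  simp only [mem_insert, mem_union]
  rintro T (rfl | hT | hT)
  exacts [hT₁, hD₁ T hT, hD₂ T hT]

lemma add_natCast_sub_one (a : ZMod n) : a + ((n - 1 : ℕ) : ZMod n) = a - 1 := by
  rw [Nat.cast_sub NeZero.one_le, ZMod.natCast_self, Nat.cast_one, zero_sub, ← sub_eq_add_neg]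

lemma ConvexCCW.isDelaunayEdge_sub_one (hσ : σ ≠ 0) (hconv : ConvexCCW V) (a : ZMod n) :
    IsDelaunayEdge σ V a (a - 1) := by
  have hdet : ∀ x, x ≠ a → x ≠ a - 1 → det2 (V a) (V (a - 1)) (V x) < 0 := fun x hxa hxc => by
    have := hconv.2 (a - 1) x hxc (by rwa [sub_add_cancel])
    rw [sub_add_cancel] at this
    rw [det2_rotate, det2_swap]
    linarith
  -- every other vertex is on the same side of the chord, so a circle of the pencil far enough
  -- to the other side works
  obtain ⟨M, hM⟩ := (Set.finite_range fun x => σ * pencilParam (V a) (V (a - 1)) (V x)).bddAbove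
  refine ⟨pencilCenter (V a) (V (a - 1)) (M / σ), distSq_pencilCenter_left_eq_right _ _ _,
    fun x => ?_⟩
  by_cases hxa : x = a
  · simp [hxa]
  by_cases hxc : x = a - 1
  · simp [hxc, ← distSq_pencilCenter_left_eq_right]
  rw [pencil_power_nonneg_iff_of_neg _ _ (hdet x hxa hxc), mul_div_cancel₀ M hσ]
  exact hM ⟨x, rfl⟩

theorem isSideTriangulation_delaunayTriangles (hn : 3 ≤ n) (hσ : σ ≠ 0) (hconv : ConvexCCW V)
    (hgen : GenericPoly V) :
    IsSideTriangulation (delaunayTriangles σ V univ) where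
  card_eq_three T hT := (mem_delaunayTriangles_univ.1 hT).1
  card_eq := by
    have := (delaunayTriangles_arc hσ hconv hgen (by omega) le_rfl (a := 0)
      (by rw [add_natCast_sub_one]; exact hconv.isDelaunayEdge_sub_one hσ 0)).1
    rwa [arc_eq_univ 0 le_rfl] at this
  existsUnique_side i := by
    have hedge : IsDelaunayEdge σ V (i + 1) (i + 1 + ((n - 1 : ℕ) : ZMod n)) := by
      simpa [add_natCast_sub_one] using hconv.isDelaunayEdge_sub_one hσ (i + 1)
    obtain ⟨k, hk, hkL, hT₁⟩ := exists_isDelaunay_triangle hσ hconv hgen hn le_rfl hedge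
    have hc : i + 1 + ((n - 1 : ℕ) : ZMod n) = i := by
      rw [add_natCast_sub_one, add_sub_cancel_right]
    refine ⟨_, ⟨mem_delaunayTriangles_univ.2 ⟨card_triangle hk hkL le_rfl, hT₁⟩,
      by simp [hc], by simp⟩, fun T ⟨hT, hiT, hi₁T⟩ => by_contra fun hne => ?_⟩
    rw [← arc_eq_univ (i + 1) le_rfl] at hT hT₁
    have hgi := gap_add_natCast (i + 1) (k := n - 1) (by omega)
    rw [hc] at hgi
    have := gap_add_gap (i + 1) (i + 1 + (k : ZMod n)) (i + 1)
    rw [gap_self, gap_add_natCast (i + 1) (k := k) (by omega)] at this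
    rcases subset_arc_or_subset_arc_of_isDelaunay hconv hk hkL le_rfl hT₁ hT hne with h | h
    · have := mem_arc.1 (h hiT); omega
    · have := mem_arc.1 (h hi₁T); have := gap_lt (i + 1 + (k : ZMod n)) (i + 1); omega

lemma adjPairs_eq_card (T : Finset (ZMod n)) : adjPairs T = #{i | i ∈ T ∧ i + 1 ∈ T} := by
  have : {p : ZMod n × ZMod n | p.1 ∈ T ∧ p.2 ∈ T ∧ p.2 = p.1 + 1} =
      (fun i => (i, i + 1)) '' ↑({i | i ∈ T ∧ i + 1 ∈ T} : Finset (ZMod n)) := by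
    ext ⟨i, j⟩
    simp only [Set.mem_ofPred_eq, coe_filter, mem_univ, true_and, Set.mem_image, Prod.mk.injEq]
    constructor
    · rintro ⟨hi, hj, rfl⟩; exact ⟨i, ⟨hi, hj⟩, rfl, rfl⟩
    · rintro ⟨i, ⟨hi, hj⟩, rfl, rfl⟩; exact ⟨hi, hj, rfl⟩
  rw [adjPairs, this, Set.ncard_image_of_injective _ fun i j h => (Prod.mk.inj h).1,
    Set.ncard_coe_finset]

/-- A set closed under `· + 1` is invariant under this shift, so its sum grows by its size:
hence `3 = 0` in `ZMod n`, impossible for `n ≥ 4`. -/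
lemma adjPairs_le_two (hn : 4 ≤ n) {T : Finset (ZMod n)} (hT : T.card = 3) : adjPairs T ≤ 2 := by
  rw [adjPairs_eq_card]
  by_contra! h
  have hsub : ({i | i ∈ T ∧ i + 1 ∈ T} : Finset (ZMod n)) ⊆ T := fun i hi => (mem_filter.1 hi).2.1
  have hclosed : ∀ i ∈ T, i + 1 ∈ T := fun i hi =>
    (mem_filter.1 (eq_of_subset_of_card_le hsub (by omega) ▸ hi)).2.2
  have himage : T.image (· + 1) = T :=
    eq_of_subset_of_card_le (image_subset_iff.2 hclosed)
      (card_image_of_injective _ (add_left_injective 1)).ge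
  have hsum : ∑ i ∈ T, i = ∑ i ∈ T, i + (T.card : ZMod n) := by
    conv_lhs => rw [← himage]
    rw [sum_image fun i _ j _ h => add_right_cancel h, sum_add_distrib, sum_const, nsmul_one]
  rw [left_eq_add, hT, ZMod.natCast_eq_zero_iff] at hsum
  have := Nat.le_of_dvd (by norm_num) hsum
  omega

lemma IsSideTriangulation.sum_adjPairs {D : Finset (Finset (ZMod n))} (h : IsSideTriangulation D) :
    ∑ T ∈ D, adjPairs T = n := by
  simp only [adjPairs_eq_card]
  calc ∑ T ∈ D, #{i | i ∈ T ∧ i + 1 ∈ T} = ∑ i, #{T ∈ D | i ∈ T ∧ i + 1 ∈ T} :=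
        sum_card_bipartiteAbove_eq_sum_card_bipartiteBelow (fun T i => i ∈ T ∧ i + 1 ∈ T)
    _ = ∑ _i : ZMod n, 1 := sum_congr rfl fun i _ => by
        obtain ⟨T, hT, huniq⟩ := h.existsUnique_side i
        refine card_eq_one.2 ⟨T, ext fun T' => ?_⟩
        rw [mem_filter, mem_singleton]
        exact ⟨fun h' => huniq T' h', fun h' => h' ▸ hT⟩
    _ = n := by simp

lemma IsSideTriangulation.card_filter_adjPairs (hn : 4 ≤ n) {D : Finset (Finset (ZMod n))}
    (h : IsSideTriangulation D) :
    #(D.filter (adjPairs · = 2)) = #(D.filter (adjPairs · = 0)) + 2 ∧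
      #(D.filter (adjPairs · = 2)) + #(D.filter (adjPairs · = 0)) +
        #(D.filter (adjPairs · = 1)) = n - 2 := by
  have hmaps : ∀ T ∈ D, adjPairs T ∈ range 3 := fun T hT =>
    mem_range.2 (Nat.lt_succ_of_le (adjPairs_le_two hn (h.card_eq_three T hT)))
  have hcard := card_eq_sum_card_fiberwise hmaps
  have hsum := (sum_fiberwise_of_maps_to hmaps adjPairs).symm
  rw [h.sum_adjPairs] at hsum
  have hfiber : ∀ k, ∑ T ∈ D with adjPairs T = k, adjPairs T = #{T ∈ D | adjPairs T = k} * k :=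
    fun k => sum_const_nat fun T hT => (mem_filter.1 hT).2
  simp only [sum_range_succ, sum_range_zero, hfiber] at hcard hsum
  have := h.card_eq
  omega

lemma isDelaunay_neg_one_univ_iff {T : Finset (ZMod n)} (hT : T.Nonempty) :
    IsDelaunay (-1) V univ T ↔ FullCircle V T := by
  obtain ⟨v₀, hv₀⟩ := hT
  constructor
  · rintro ⟨O, r, hOT, hO⟩
    refine ⟨O, dist (V v₀) O, fun v hv => dist_eq_dist_iff_distSq.2 (by rw [hOT v hv, hOT v₀ hv₀]),
      fun x hx => dist_lt_dist_iff_distSq.2 ?_⟩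
    linarith [hO x (mem_univ x) hx, hOT v₀ hv₀]
  · rintro ⟨O, R, hOT, hO⟩
    refine ⟨O, distSq (V v₀) O,
      fun v hv => dist_eq_dist_iff_distSq.1 (by rw [hOT v hv, hOT v₀ hv₀]), fun x _ hx => ?_⟩
    have := dist_lt_dist_iff_distSq.1 ((hO x hx).trans_eq (hOT v₀ hv₀).symm)
    linarith

lemma isDelaunay_one_univ_iff (hgen : GenericPoly V) {T : Finset (ZMod n)} (hT : T.card = 3) :
    IsDelaunay 1 V univ T ↔ EmptyCircle V T := by
  obtain ⟨a, b, c, hab, hac, hbc, rfl⟩ := card_eq_three.1 hT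
  have ha : a ∈ ({a, b, c} : Finset (ZMod n)) := by simp
  constructor
  · rintro ⟨O, r, hOT, hO⟩
    refine ⟨O, dist (V a) O, fun v hv => dist_eq_dist_iff_distSq.2 (by rw [hOT v hv, hOT a ha]),
      fun x => dist_le_dist_iff_distSq.2 ?_⟩
    by_cases hx : x ∈ ({a, b, c} : Finset (ZMod n))
    · rw [hOT x hx, hOT a ha]
    · linarith [hO x (mem_univ x) hx, hOT a ha]
  · rintro ⟨O, R, hOT, hO⟩
    have hOT' : ∀ v ∈ ({a, b, c} : Finset (ZMod n)), distSq (V v) O = distSq (V a) O :=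
      fun v hv => dist_eq_dist_iff_distSq.1 (by rw [hOT v hv, hOT a ha])
    refine hgen.isDelaunay_of_nonneg one_ne_zero hab hac hbc (hOT' b (by simp))
      (hOT' c (by simp)) fun x => ?_
    rw [one_mul, sub_nonneg]
    exact dist_le_dist_iff_distSq.1 ((hOT a ha).trans_le (hO x))

end Polygon

end

theorem bose_theorem_general
    (n : ℕ) (hn : 4 ≤ n)
    (V : ZMod n → Pt) (hconv : ConvexCCW V) (hgen : GenericPoly V) :
    ({T : Finset (ZMod n) | T.card = 3 ∧ FullCircle V T ∧ adjPairs T = 2}.ncard =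
      {T : Finset (ZMod n) | T.card = 3 ∧ FullCircle V T ∧ adjPairs T = 0}.ncard + 2) ∧
    ({T : Finset (ZMod n) | T.card = 3 ∧ EmptyCircle V T ∧ adjPairs T = 2}.ncard =
      {T : Finset (ZMod n) | T.card = 3 ∧ EmptyCircle V T ∧ adjPairs T = 0}.ncard + 2) ∧
    ({T : Finset (ZMod n) | T.card = 3 ∧ FullCircle V T ∧ adjPairs T = 2}.ncard +
      {T : Finset (ZMod n) | T.card = 3 ∧ FullCircle V T ∧ adjPairs T = 0}.ncard +
      {T : Finset (ZMod n) | T.card = 3 ∧ FullCircle V T ∧ adjPairs T = 1}.ncard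
        = n - 2) ∧
    ({T : Finset (ZMod n) | T.card = 3 ∧ EmptyCircle V T ∧ adjPairs T = 2}.ncard +
      {T : Finset (ZMod n) | T.card = 3 ∧ EmptyCircle V T ∧ adjPairs T = 0}.ncard +
      {T : Finset (ZMod n) | T.card = 3 ∧ EmptyCircle V T ∧ adjPairs T = 1}.ncard
        = n - 2) := by
  have : NeZero n := ⟨by omega⟩
  have hfull := ncard_setOf_eq_card_filter fun T => mem_delaunayTriangles_univ.trans <|
    and_congr_right fun hT => isDelaunay_neg_one_univ_iff (V := V) (card_pos.1 (by omega))
  have hempty := ncard_setOf_eq_card_filter fun T => mem_delaunayTriangles_univ.trans <|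
    and_congr_right fun hT => isDelaunay_one_univ_iff hgen hT
  obtain ⟨hF, hF'⟩ := (isSideTriangulation_delaunayTriangles (σ := -1) (by omega) (by norm_num)
    hconv hgen).card_filter_adjPairs hn
  obtain ⟨hE, hE'⟩ := (isSideTriangulation_delaunayTriangles (σ := 1) (by omega) one_ne_zero
    hconv hgen).card_filter_adjPairs hn
  simp only [hfull, hempty]
  exact ⟨hF, hE, hF', hE'⟩

/-- Bose's theorem: for a generic convex polygon with `n ≥ 4` vertices,
`s₊ = t₊ + 2`, `s₋ = t₋ + 2`, and `s₊ + t₊ + u₊ = s₋ + t₋ + u₋ = n - 2`, where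
`s, t, u` count full/empty circles through neighboring, disjoint, intermediate
triples of vertices respectively. -/
theorem bose_theorem
    (n : ℕ) [NeZero n] (hn : 4 ≤ n)
    (V : ZMod n → Pt) (hconv : ConvexCCW V) (hgen : GenericPoly V) :
    ({T : Finset (ZMod n) | T.card = 3 ∧ FullCircle V T ∧ adjPairs T = 2}.ncard =
      {T : Finset (ZMod n) | T.card = 3 ∧ FullCircle V T ∧ adjPairs T = 0}.ncard + 2) ∧
    ({T : Finset (ZMod n) | T.card = 3 ∧ EmptyCircle V T ∧ adjPairs T = 2}.ncard =
      {T : Finset (ZMod n) | T.card = 3 ∧ EmptyCircle V T ∧ adjPairs T = 0}.ncard + 2) ∧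
    ({T : Finset (ZMod n) | T.card = 3 ∧ FullCircle V T ∧ adjPairs T = 2}.ncard +
      {T : Finset (ZMod n) | T.card = 3 ∧ FullCircle V T ∧ adjPairs T = 0}.ncard +
      {T : Finset (ZMod n) | T.card = 3 ∧ FullCircle V T ∧ adjPairs T = 1}.ncard
        = n - 2) ∧
    ({T : Finset (ZMod n) | T.card = 3 ∧ EmptyCircle V T ∧ adjPairs T = 2}.ncard +
      {T : Finset (ZMod n) | T.card = 3 ∧ EmptyCircle V T ∧ adjPairs T = 0}.ncard +
      {T : Finset (ZMod n) | T.card = 3 ∧ EmptyCircle V T ∧ adjPairs T = 1}.ncard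
        = n - 2) :=
  bose_theorem_general n hn V hconv hgen
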